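/- Let G be a finite subgroup of GL(n, ℤ) and let p be an odd prime. Then the reduction homomorphism GL(n, ℤ) → GL(n, ℤ/pℤ) is injective on G. Consequently, every finite subgroup of GL(n, ℤ) has order at most |GL(n, ℤ/3ℤ)|. -/

import Mathlib

/-!
Minkowski's argument. Let `g` have finite order with `g ≡ 1 (mod p)`. Writing the order as a
product of primes, it suffices to show `g = 1` when `g^q = 1` for a prime `q`. If
`g = 1 + p^k c` with `k ≥ 1`, then in the binomial expansion of `(1 + p^k c)^q = 1` the linear
term `q p^k c` equals a sum of terms divisible by `p^(k+1)`, and even by `p^(k+2)` when `q = p`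
(here `p ≠ 2` is needed: `p^(kp)` must absorb `p^(k+2)`). Cancelling powers of `p` gives `p ∣ c`,
so `g ≡ 1 (mod p^(k+1))`. Iterating, `g - 1` is divisible by every power of `p`, hence `g = 1`.
-/

open Finset

section Ring

variable {R : Type*} [Ring R] {p : ℕ}

lemma one_add_natCast_pow_mul_pow (k q : ℕ) (c : R) :
    (1 + (p : R) ^ k * c) ^ q =
      ∑ m ∈ range (q + 1), ((p ^ (k * m) * q.choose m : ℕ) : R) * c ^ m := by
  rw [add_comm, (Commute.one_right _).add_pow]
  refine sum_congr rfl fun m _ => ?_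
  rw [one_pow, mul_one, ((Nat.cast_commute _ _).pow_left k).mul_pow, ← pow_mul, Nat.cast_mul,
    Nat.cast_pow, mul_assoc, mul_assoc, (Nat.cast_commute _ _).eq]

lemma natCast_dvd_of_pow_succ_dvd_natCast_mul (hreg : IsLeftRegular (p : R)) {j u : ℕ}
    (hu : p.Coprime u) {c : R} (h : (p : R) ^ (j + 1) ∣ ((p ^ j * u : ℕ) : R) * c) :
    (p : R) ∣ c := by
  obtain ⟨y, hy⟩ := h
  have huc : (u : R) * c = p * y := hreg.pow j <| by
    simpa only [Nat.cast_mul, Nat.cast_pow, mul_assoc, pow_succ] using hy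
  obtain ⟨a, b, hab⟩ := Nat.isCoprime_iff_coprime.mpr hu
  refine ⟨a * c + b * y, ?_⟩
  calc c = ((a * p + b * u : ℤ) : R) * c := by rw [hab, Int.cast_one, one_mul]
    _ = p * (a * c + b * y) := by
      push_cast
      rw [add_mul, mul_assoc, mul_assoc, huc, mul_add, ← mul_assoc, ← mul_assoc,
        (Int.cast_commute a _).eq, (Int.cast_commute b _).eq]
      simp only [mul_assoc]

theorem natCast_dvd_of_one_add_pow_eq_one (hp : p.Prime) (hodd : Odd p)
    (hreg : IsLeftRegular (p : R)) {q k : ℕ} (hq : q.Prime) (hk : k ≠ 0) {c : R}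
    (h : (1 + (p : R) ^ k * c) ^ q = 1) : (p : R) ∣ c := by
  set term : ℕ → R := fun m => ((p ^ (k * m) * q.choose m : ℕ) : R) * c ^ m
  have hlin : ((p ^ k * q : ℕ) : R) * c = -∑ m ∈ Ico 2 (q + 1), term m := by
    rw [one_add_natCast_pow_mul_pow,
      ← sum_range_add_sum_Ico _ (m := 2) (by linarith [hq.two_le])] at h
    simp only [sum_range_succ, range_zero, sum_empty, zero_add, mul_zero, mul_one, pow_zero,
      pow_one, Nat.choose_zero_right, Nat.choose_one_right, Nat.cast_one] at h
    rw [add_assoc, add_eq_left] at h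
    exact eq_neg_of_add_eq_zero_left h
  have htail {j : ℕ} (hj : ∀ m, 2 ≤ m → m ≤ q → p ^ j ∣ p ^ (k * m) * q.choose m) :
      (p : R) ^ j ∣ ((p ^ k * q : ℕ) : R) * c := by
    rw [hlin, dvd_neg]
    refine dvd_sum fun m hm => Dvd.dvd.mul_right ?_ _
    rw [mem_Ico] at hm
    rw [← Nat.cast_pow]
    exact Nat.cast_dvd_cast (hj m hm.1 (by omega))
  have hk1 := Nat.one_le_iff_ne_zero.mpr hk
  by_cases hqp : q = p
  · obtain rfl : p = q := hqp.symm
    refine natCast_dvd_of_pow_succ_dvd_natCast_mul hreg (j := k + 1) (Nat.coprime_one_right _) ?_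
    have hp3 : 3 ≤ p := by obtain ⟨t, rfl⟩ := hodd; have := hp.two_le; omega
    rw [mul_one, pow_succ p k]
    refine htail fun m hm hmq => ?_
    rcases hmq.lt_or_eq with hmp | hmp
    · rw [pow_succ]
      exact mul_dvd_mul (pow_dvd_pow p (by nlinarith)) (hp.dvd_choose_self (by omega) hmp)
    · subst m
      exact (pow_dvd_pow p (by nlinarith)).mul_right _
  · refine natCast_dvd_of_pow_succ_dvd_natCast_mul hreg (j := k)
      ((Nat.coprime_primes hp hq).mpr (Ne.symm hqp)) ?_
    exact htail fun m hm _ => (pow_dvd_pow p (by nlinarith)).mul_right _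

theorem natCast_pow_succ_dvd_sub_one_of_pow_eq_one (hp : p.Prime) (hodd : Odd p)
    (hreg : IsLeftRegular (p : R)) {q : ℕ} (hq : q.Prime) {a : R} (ha : a ^ q = 1)
    (hpa : (p : R) ∣ a - 1) : ∀ k, (p : R) ^ (k + 1) ∣ a - 1
  | 0 => by rwa [zero_add, pow_one]
  | k + 1 => by
    obtain ⟨c, hc⟩ := natCast_pow_succ_dvd_sub_one_of_pow_eq_one hp hodd hreg hq ha hpa k
    rw [sub_eq_iff_eq_add'] at hc
    obtain ⟨d, rfl⟩ :=
      natCast_dvd_of_one_add_pow_eq_one hp hodd hreg hq k.succ_ne_zero (hc ▸ ha)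
    exact ⟨d, by rw [hc, add_sub_cancel_left, pow_succ _ (k + 1), mul_assoc]⟩

theorem eq_one_of_pow_eq_one_of_natCast_dvd_sub_one (hp : p.Prime) (hodd : Odd p)
    (hreg : IsLeftRegular (p : R)) (hsep : ∀ x : R, (∀ k, (p : R) ^ k ∣ x) → x = 0)
    {m : ℕ} (hm : m ≠ 0) {a : R} (ha : a ^ m = 1) (hpa : (p : R) ∣ a - 1) : a = 1 := by
  induction m using induction_on_primes generalizing a with
  | zero => exact absurd rfl hm
  | one => rwa [pow_one] at ha
  | prime_mul q m hq ih =>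
    refine ih (right_ne_zero_of_mul hm) ?_ hpa
    have hpow := natCast_pow_succ_dvd_sub_one_of_pow_eq_one hp hodd hreg hq
      (by rw [← pow_mul, mul_comm, ha]) (hpa.trans (sub_one_dvd_pow_sub_one a m))
    refine sub_eq_zero.mp (hsep _ fun k => ?_)
    exact (pow_dvd_pow _ k.le_succ).trans (hpow k)

end Ring

namespace Matrix

variable {ι α : Type*} [Fintype ι] [DecidableEq ι]

lemma natCast_mul_apply [NonAssocSemiring α] (c : ℕ) (X : Matrix ι ι α) (i j : ι) :
    ((c : Matrix ι ι α) * X) i j = c * X i j := by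
  rw [← nsmul_eq_mul, smul_apply, nsmul_eq_mul]

lemma natCast_dvd_iff [Semiring α] {c : ℕ} {X : Matrix ι ι α} :
    (c : Matrix ι ι α) ∣ X ↔ ∀ i j, (c : α) ∣ X i j := by
  constructor
  · rintro ⟨Y, rfl⟩ i j
    exact ⟨Y i j, natCast_mul_apply c Y i j⟩
  · intro h
    choose Y hY using h
    exact ⟨of Y, ext fun i j => (hY i j).trans (natCast_mul_apply c (of Y) i j).symm⟩

lemma isLeftRegular_natCast [NonAssocSemiring α] {c : ℕ} (hc : IsLeftRegular (c : α)) :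
    IsLeftRegular (c : Matrix ι ι α) := fun X Y h => ext fun i j => hc <| by
  simpa only [natCast_mul_apply] using congrFun (congrFun h i) j

lemma eq_zero_of_forall_natCast_pow_dvd {p : ℕ} (hp : 1 < p) {X : Matrix ι ι ℤ}
    (h : ∀ k, (p : Matrix ι ι ℤ) ^ k ∣ X) : X = 0 := by
  ext i j
  have hdvd := h (X i j).natAbs
  rw [← Nat.cast_pow] at hdvd
  exact Int.eq_zero_of_dvd_of_natAbs_lt_natAbs (natCast_dvd_iff.mp hdvd i j)
    (by simpa using Nat.lt_pow_self hp)

end Matrix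

namespace Matrix.GeneralLinearGroup

variable {ι : Type*} [Fintype ι] [DecidableEq ι] {p : ℕ}

lemma natCast_dvd_sub_one_of_map_eq_one {g : GL ι ℤ}
    (h : map (Int.castRingHom (ZMod p)) g = 1) :
    (p : Matrix ι ι ℤ) ∣ (g : Matrix ι ι ℤ) - 1 := by
  have h0 : (Int.castRingHom (ZMod p)).mapMatrix ((g : Matrix ι ι ℤ) - 1) = 0 := by
    rw [map_sub, map_one, sub_eq_zero]
    exact congrArg Units.val h
  exact natCast_dvd_iff.mpr fun i j =>
    (ZMod.intCast_zmod_eq_zero_iff_dvd _ _).mp (congrFun (congrFun h0 i) j)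

theorem eq_one_of_isOfFinOrder_of_map_eq_one (hp : p.Prime) (hodd : Odd p) {g : GL ι ℤ}
    (hg : IsOfFinOrder g) (h : map (Int.castRingHom (ZMod p)) g = 1) : g = 1 := by
  obtain ⟨m, hm, hgm⟩ := isOfFinOrder_iff_pow_eq_one.mp hg
  refine Units.ext <| eq_one_of_pow_eq_one_of_natCast_dvd_sub_one hp hodd
    (isLeftRegular_natCast (IsRegular.of_ne_zero (mod_cast hp.ne_zero)).left)
    (fun _ => eq_zero_of_forall_natCast_pow_dvd hp.one_lt)
    hm.ne' ?_ (natCast_dvd_sub_one_of_map_eq_one h)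
  rw [← Units.val_pow_eq_pow_val, hgm, Units.val_one]

theorem injOn_map_of_finite (hp : p.Prime) (hodd : Odd p) (G : Subgroup (GL ι ℤ)) [Finite G] :
    Set.InjOn (map (Int.castRingHom (ZMod p))) (G : Set (GL ι ℤ)) := by
  intro x hx y hy hxy
  have hxy' : x⁻¹ * y ∈ G := G.mul_mem (G.inv_mem hx) hy
  have hfin : IsOfFinOrder (x⁻¹ * y) := by
    simpa using G.subtype.isOfFinOrder (isOfFinOrder_of_finite (⟨x⁻¹ * y, hxy'⟩ : G))
  have hker : map (Int.castRingHom (ZMod p)) (x⁻¹ * y) = 1 := by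
    rw [map_mul, map_inv, hxy, inv_mul_cancel]
  exact inv_mul_eq_one.mp (eq_one_of_isOfFinOrder_of_map_eq_one hp hodd hfin hker)

end Matrix.GeneralLinearGroup

/-- Reduction modulo an odd prime `p` is injective on any finite subgroup of `GL(n, ℤ)`;
consequently every finite subgroup of `GL(n, ℤ)` has order at most `|GL(n, ℤ/3ℤ)|`. -/
theorem reduction_injOn_finite_subgroup (n p : ℕ) (hp : p.Prime) (hodd : Odd p)
    (G : Subgroup (GL (Fin n) ℤ)) (hG : Finite G) :
    Set.InjOn (Matrix.GeneralLinearGroup.map (Int.castRingHom (ZMod p))) (G : Set (GL (Fin n) ℤ)) ∧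
    Nat.card G ≤ Nat.card (GL (Fin n) (ZMod 3)) :=
  ⟨Matrix.GeneralLinearGroup.injOn_map_of_finite hp hodd G,
    Nat.card_le_card_of_injective _ (Set.injOn_iff_injective.mp
      (Matrix.GeneralLinearGroup.injOn_map_of_finite Nat.prime_three (by decide) G))⟩
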